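/- The Lally bound dominates the eigencode distance: Let C ⊆ F_q^{mℓ} be a nonzero λ-QT code of index ℓ and co-index m whose eigenvalue set equals all of Ω, and let ℂ_Ω be the eigencode of ∩_{β∈Ω} V_β. Let Ĉ be the smallest λ-constacyclic code of length m over F_{q^ℓ} containing τ(C) (for a fixed basis {1, γ, …, γ^{ℓ−1}} of F_{q^ℓ} over F_q, with τ sending the array (c_{k,j}) to the vector with entries Σ_j c_{k,j}γ^j), and let B ⊆ F_q^ℓ be the F_q-span of all rows of all codewords of C. Then the Lally estimate d_L = d(Ĉ)·d(B) satisfies d(C) ≥ d_L ≥ d(ℂ_Ω). -/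

import Mathlib

open Polynomial

open scoped Classical in
/-- Hamming weight: the number of nonzero coordinates. -/
noncomputable def wt {ι K : Type*} [Fintype ι] [Zero K] (c : ι → K) : ℕ :=
  (Finset.univ.filter fun i => c i ≠ 0).card

/-- Minimum Hamming weight of a nonzero codeword of `S`, with `⊤` for the zero code. -/
noncomputable def minDist {ι K : Type*} [Fintype ι] [Zero K] (S : Set (ι → K)) : ℕ∞ :=
  sInf {n : ℕ∞ | ∃ c ∈ S, c ≠ 0 ∧ (wt c : ℕ∞) = n}

/-- The λ-constashift by ℓ positions on m×ℓ arrays: row 0 becomes λ times old last row. -/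
def rho {Fq : Type*} [Field Fq] (m ℓ : ℕ) [NeZero m] (lam : Fq)
    (c : ZMod m × Fin ℓ → Fq) : ZMod m × Fin ℓ → Fq :=
  fun p => (if p.1 = 0 then lam else 1) * c (p.1 - 1, p.2)

/-- Reduction of a vector of polynomials mod `X^m - λ`, written as an m×ℓ array. -/
noncomputable def arrOf {Fq : Type*} [Field Fq] (m ℓ : ℕ) [NeZero m] (lam : Fq)
    (v : Fin ℓ → Polynomial Fq) : ZMod m × Fin ℓ → Fq :=
  fun p => ((v p.2) %ₘ (Polynomial.X ^ m - Polynomial.C lam)).coeff (p.1).val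

/-- The eigenspace of `β` for the polynomial matrix `G`: the null space of `G(β)`. -/
def Vspace {Fq F : Type*} [Field Fq] [Field F] [Algebra Fq F] (ℓ : ℕ)
    (G : Matrix (Fin ℓ) (Fin ℓ) (Polynomial Fq)) (β : F) : Set (Fin ℓ → F) :=
  {v | (G.map fun p => Polynomial.aeval β p).mulVec v = 0}

/-- The eigencode of a set of vectors `V ⊆ F^ℓ`. -/
def eigencode {Fq F : Type*} [Field Fq] [Field F] [Algebra Fq F] (ℓ : ℕ)
    (V : Set (Fin ℓ → F)) : Set (Fin ℓ → Fq) :=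
  {u | ∀ v ∈ V, ∑ j, v j * algebraMap Fq F (u j) = 0}


/-!
A codeword `c` has nonzero `k`-th row exactly when `τ c` has nonzero `k`-th coordinate (the
powers of `γ` are a basis), and every row lies in `B`; summing row weights over the support of
`τ c ∈ Ĉ` gives `d(Ĉ) d(B) ≤ wt c`. Since `d(Ĉ) ≥ 1`, the second bound follows from `B ⊆ ℂ_Ω`.
For that, let `v_j` be the column polynomials of `c` and `w ∈ V_β` for all roots `β`. The vector
`v` is an `F_q[x]`-combination of the rows of `G`, each orthogonal to `w` at `x = β`, so
`P = ∑_j w_j v_j` vanishes at all `m` roots of the separable `x^m - λ`. As `deg P < m`, `P = 0`,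
and its `k`-th coefficient says that the `k`-th row of `c` is orthogonal to `w`.
-/

section HammingWeight

variable {ι κ K : Type*} [Fintype ι] [Zero K]

theorem wt_eq_zero_iff {c : ι → K} : wt c = 0 ↔ c = 0 := by
  simp [wt, Finset.filter_eq_empty_iff, funext_iff]

theorem minDist_le_wt {S : Set (ι → K)} {c : ι → K} (hc : c ∈ S) (hc0 : c ≠ 0) :
    minDist S ≤ wt c :=
  sInf_le ⟨c, hc, hc0, rfl⟩

theorem one_le_minDist (S : Set (ι → K)) : 1 ≤ minDist S :=
  le_sInf <| by
    rintro _ ⟨c, -, hc0, rfl⟩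
    exact_mod_cast Nat.one_le_iff_ne_zero.mpr (mt wt_eq_zero_iff.mp hc0)

theorem minDist_anti {S T : Set (ι → K)} (h : S ⊆ T) : minDist T ≤ minDist S :=
  sInf_le_sInf fun _ ⟨c, hc, hc0, hn⟩ => ⟨c, h hc, hc0, hn⟩

theorem wt_eq_sum_wt_row [Fintype κ] (c : ι × κ → K) :
    wt c = ∑ k, wt fun j => c (k, j) := by
  simp only [wt, Finset.card_filter, Fintype.sum_prod_type]

theorem minDist_mul_minDist_le_minDist {L : Type*} [Fintype κ] [Zero L]
    {S : Set (ι × κ → K)} {T : Set (ι → L)} {R : Set (κ → K)}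
    (τ : (ι × κ → K) → ι → L) (hτ : ∀ c k, τ c k = 0 ↔ (fun j => c (k, j)) = 0)
    (hT : ∀ c ∈ S, τ c ∈ T) (hR : ∀ c ∈ S, ∀ k, (fun j => c (k, j)) ∈ R) :
    minDist T * minDist R ≤ minDist S := by
  classical
  refine le_sInf ?_
  rintro _ ⟨c, hc, hc0, rfl⟩
  have hτc : τ c ≠ 0 := fun h =>
    hc0 <| funext fun p => congrFun ((hτ c p.1).mp (congrFun h p.1)) p.2
  have hrow : ∀ k ∈ Finset.univ.filter (τ c · ≠ 0), minDist R ≤ wt fun j => c (k, j) :=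
    fun k hk => minDist_le_wt (hR c hc k) (mt (hτ c k).mpr (Finset.mem_filter.mp hk).2)
  calc minDist T * minDist R
      ≤ (wt (τ c) : ℕ∞) * minDist R := mul_le_mul_left (minDist_le_wt (hT c hc) hτc) _
    _ = ∑ _k ∈ Finset.univ.filter (τ c · ≠ 0), minDist R := by
        rw [Finset.sum_const, nsmul_eq_mul, wt]
    _ ≤ ∑ k ∈ Finset.univ.filter (τ c · ≠ 0), ((wt fun j => c (k, j) : ℕ) : ℕ∞) :=
        Finset.sum_le_sum hrow
    _ ≤ ∑ k, ((wt fun j => c (k, j) : ℕ) : ℕ∞) :=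
        Finset.sum_le_sum_of_subset (Finset.filter_subset _ _)
    _ = wt c := by rw [wt_eq_sum_wt_row, Nat.cast_sum]

end HammingWeight

theorem Module.Basis.sum_algebraMap_mul_eq_zero_iff {ι R A : Type*} [Fintype ι] [CommRing R]
    [Ring A] [Algebra R A] (b : Module.Basis ι R A) (u : ι → R) :
    ∑ j, algebraMap R A (u j) * b j = 0 ↔ u = 0 := by
  simp_rw [← Algebra.smul_def, ← b.equivFun_symm_apply]
  exact b.equivFun.symm.map_eq_zero_iff

theorem natCast_ne_zero_of_coprime_card {Fq : Type*} [Field Fq] [Fintype Fq] {m : ℕ}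
    (hcop : Nat.Coprime m (Fintype.card Fq)) : (m : Fq) ≠ 0 := by
  intro h
  have hb := Nat.gcd_eq_gcd_ab m (Fintype.card Fq)
  rw [hcop.gcd_eq_one] at hb
  have h1 := congrArg (fun z : ℤ => (z : Fq)) hb
  push_cast at h1
  rw [h, FiniteField.cast_card_eq_zero] at h1
  simp at h1

section Eigencode

variable {Fq F : Type*} [Field Fq] [Field F] [Algebra Fq F]

theorem Polynomial.eq_zero_of_degree_lt_of_eval_rootsOf_X_pow_sub_C {m : ℕ} {lam : Fq}
    (hm : (m : Fq) ≠ 0) (hlam : lam ≠ 0) (hsplit : ((X ^ m - C lam).map (algebraMap Fq F)).Splits)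
    {P : F[X]} (hdeg : P.degree < m) (hP : ∀ β : F, β ^ m = algebraMap Fq F lam → P.eval β = 0) :
    P = 0 := by
  have hcard : Fintype.card ((X ^ m - C lam : Fq[X]).rootSet F) = m := by
    rw [card_rootSet_eq_natDegree (separable_X_pow_sub_C lam hm hlam) hsplit,
      natDegree_X_pow_sub_C]
  refine eq_zero_of_degree_lt_of_eval_finset_eq_zero ((X ^ m - C lam).rootSet F).toFinset
    (by rwa [Set.toFinset_card, hcard]) fun β hβ => hP β ?_
  rw [Set.mem_toFinset, mem_rootSet] at hβ
  simpa [sub_eq_zero] using hβ.2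

theorem sum_mul_algebraMap_coeff_eq_zero {ι : Type*} [Fintype ι] {m : ℕ} {lam : Fq}
    (hm : (m : Fq) ≠ 0) (hlam : lam ≠ 0) (hsplit : ((X ^ m - C lam).map (algebraMap Fq F)).Splits)
    {v : ι → Fq[X]} (hv : ∀ j, (v j).degree < m) {w : ι → F}
    (h : ∀ β : F, β ^ m = algebraMap Fq F lam → ∑ j, w j * aeval β (v j) = 0) (n : ℕ) :
    ∑ j, w j * algebraMap Fq F ((v j).coeff n) = 0 := by
  set P : F[X] := ∑ j, C (w j) * (v j).map (algebraMap Fq F)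
  have hdeg : P.degree < m := by
    refine lt_of_le_of_lt (degree_sum_le _ _) ((Finset.sup_lt_iff (WithBot.bot_lt_coe m)).mpr ?_)
    intro j _
    calc (C (w j) * (v j).map (algebraMap Fq F)).degree
        ≤ (C (w j)).degree + ((v j).map (algebraMap Fq F)).degree := degree_mul_le _ _
      _ ≤ 0 + (v j).degree := add_le_add degree_C_le degree_map_le
      _ < m := by rw [zero_add]; exact hv j
  have hP : P = 0 := eq_zero_of_degree_lt_of_eval_rootsOf_X_pow_sub_C hm hlam hsplit hdeg
    fun β hβ => by simpa [P, eval_finsetSum, eval_map_algebraMap] using h β hβ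
  simpa [P, finsetSum_coeff, coeff_C_mul] using congrArg (coeff · n) hP

def eigencodeSubmodule (ℓ : ℕ) (V : Set (Fin ℓ → F)) : Submodule Fq (Fin ℓ → Fq) where
  carrier := eigencode ℓ V
  zero_mem' _ _ := by simp
  add_mem' hu hu' v hv := by
    simp [mul_add, Finset.sum_add_distrib, hu v hv, hu' v hv]
  smul_mem' a u hu v hv := by
    simp [mul_left_comm _ (algebraMap Fq F a), ← Finset.mul_sum, hu v hv]

theorem span_subset_eigencode {ℓ : ℕ} {V : Set (Fin ℓ → F)} {S : Set (Fin ℓ → Fq)}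
    (h : S ⊆ eigencode ℓ V) : (Submodule.span Fq S : Set (Fin ℓ → Fq)) ⊆ eigencode ℓ V :=
  Submodule.span_le (p := eigencodeSubmodule ℓ V).mpr h

theorem sum_mul_aeval_eq_zero_of_mem_span {ℓ : ℕ} {G : Matrix (Fin ℓ) (Fin ℓ) Fq[X]} {β : F}
    {w : Fin ℓ → F} (hw : w ∈ Vspace ℓ G β) {v : Fin ℓ → Fq[X]}
    (hv : v ∈ Submodule.span Fq[X] (Set.range fun i j => G i j)) :
    ∑ j, w j * aeval β (v j) = 0 := by
  induction hv using Submodule.span_induction with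
  | mem x hx =>
    obtain ⟨i, rfl⟩ := hx
    simpa [Matrix.mulVec, dotProduct, mul_comm] using congrFun hw i
  | zero => simp
  | add x y _ _ hx hy => simp [mul_add, Finset.sum_add_distrib, hx, hy]
  | smul a x _ hx => simp [mul_left_comm _ (aeval β a), ← Finset.mul_sum, hx]

end Eigencode

section ColumnPolynomials

variable {Fq : Type*} [Field Fq] (m ℓ : ℕ) [NeZero m]

noncomputable def polyOfArr (c : ZMod m × Fin ℓ → Fq) : Fin ℓ → Fq[X] :=
  fun j => ∑ k : ZMod m, monomial k.val (c (k, j))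

variable {m ℓ}

theorem coeff_polyOfArr_val (c : ZMod m × Fin ℓ → Fq) (j : Fin ℓ) (k : ZMod m) :
    (polyOfArr m ℓ c j).coeff k.val = c (k, j) := by
  simp [polyOfArr, coeff_monomial, ZMod.val_injective m |>.eq_iff]

theorem degree_polyOfArr_lt (c : ZMod m × Fin ℓ → Fq) (j : Fin ℓ) :
    (polyOfArr m ℓ c j).degree < m :=
  mem_degreeLT.mp <| Submodule.sum_mem _ fun k _ =>
    mem_degreeLT.mpr <| (degree_monomial_le _ _).trans_lt (by exact_mod_cast ZMod.val_lt k)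

theorem arrOf_polyOfArr (lam : Fq) (c : ZMod m × Fin ℓ → Fq) :
    arrOf m ℓ lam (polyOfArr m ℓ c) = c := by
  funext ⟨k, j⟩
  have hmod : polyOfArr m ℓ c j %ₘ (X ^ m - C lam) = polyOfArr m ℓ c j := by
    rw [modByMonic_eq_self_iff (monic_X_pow_sub_C lam (NeZero.ne m)),
      degree_X_pow_sub_C (NeZero.pos m)]
    exact degree_polyOfArr_lt c j
  rw [arrOf, hmod, coeff_polyOfArr_val]

theorem row_mem_eigencode {F : Type*} [Field F] [Algebra Fq F] {lam : Fq}
    (hm : (m : Fq) ≠ 0) (hlam : lam ≠ 0) (hsplit : ((X ^ m - C lam).map (algebraMap Fq F)).Splits)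
    {G : Matrix (Fin ℓ) (Fin ℓ) Fq[X]} {c : ZMod m × Fin ℓ → Fq}
    (hc : polyOfArr m ℓ c ∈ Submodule.span Fq[X] (Set.range fun i j => G i j)) (k : ZMod m) :
    (fun j => c (k, j)) ∈
      eigencode ℓ (⋂ β ∈ {x : F | x ^ m = algebraMap Fq F lam}, Vspace ℓ G β) := by
  intro w hw
  have h := sum_mul_algebraMap_coeff_eq_zero hm hlam hsplit (degree_polyOfArr_lt c)
    (fun β hβ => sum_mul_aeval_eq_zero_of_mem_span (Set.mem_iInter₂.mp hw β hβ) hc) k.val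
  simpa only [coeff_polyOfArr_val] using h

end ColumnPolynomials

theorem lally_dominates_eigencode_general
    {Fq F K : Type*} [Field Fq] [Fintype Fq] [Field F] [Algebra Fq F] [Field K] [Algebra Fq K]
    (m ℓ : ℕ) [NeZero m] (hcop : Nat.Coprime m (Fintype.card Fq))
    (lam : Fq) (hlam : lam ≠ 0)
    (hsplit : IsSplittingField Fq F (X ^ m - C lam))
    (𝓒 : Submodule Fq (ZMod m × Fin ℓ → Fq))
    (G : Matrix (Fin ℓ) (Fin ℓ) (Polynomial Fq))
    (hGen : ∀ v : Fin ℓ → Polynomial Fq,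
      arrOf m ℓ lam v ∈ 𝓒 ↔ v ∈ Submodule.span (Polynomial Fq) (Set.range fun i j => G i j))
    (VΩ : Set (Fin ℓ → F))
    (hVΩ : VΩ = ⋂ β ∈ {x : F | x ^ m = algebraMap Fq F lam}, Vspace ℓ G β)
    (γ : K) (bK : Module.Basis (Fin ℓ) Fq K) (hbK : ∀ j : Fin ℓ, bK j = γ ^ (j : ℕ))
    (τ : (ZMod m × Fin ℓ → Fq) → (ZMod m → K))
    (hτ : ∀ c k, τ c k = ∑ j : Fin ℓ, algebraMap Fq K (c (k, j)) * γ ^ (j : ℕ))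
    (Chat : Submodule K (ZMod m → K))
    (hChat : Chat = sInf {D : Submodule K (ZMod m → K) |
      (∀ c ∈ 𝓒, τ c ∈ D) ∧
      ∀ d ∈ D, (fun k => (if k = 0 then algebraMap Fq K lam else 1) * d (k - 1)) ∈ D})
    (B : Submodule Fq (Fin ℓ → Fq))
    (hB : B = Submodule.span Fq {u | ∃ c ∈ 𝓒, ∃ k : ZMod m, u = fun j => c (k, j)}) :
    minDist (Chat : Set (ZMod m → K)) * minDist (B : Set (Fin ℓ → Fq)) ≤
      minDist (𝓒 : Set (ZMod m × Fin ℓ → Fq)) ∧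
    minDist (eigencode (Fq := Fq) ℓ VΩ) ≤
      minDist (Chat : Set (ZMod m → K)) * minDist (B : Set (Fin ℓ → Fq)) := by
  have hτ_eq_zero : ∀ c k, τ c k = 0 ↔ (fun j => c (k, j)) = 0 := fun c k => by
    simpa only [hτ, ← hbK] using bK.sum_algebraMap_mul_eq_zero_iff _
  have hm : (m : Fq) ≠ 0 := natCast_ne_zero_of_coprime_card hcop
  have hrow_B : ∀ c ∈ 𝓒, ∀ k, (fun j => c (k, j)) ∈ B := fun c hc k =>
    hB ▸ Submodule.subset_span ⟨c, hc, k, rfl⟩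
  have hτ_Chat : ∀ c ∈ 𝓒, τ c ∈ Chat := fun c hc =>
    hChat ▸ Submodule.mem_sInf.mpr fun _ hD => hD.1 c hc
  have hB_sub : (B : Set (Fin ℓ → Fq)) ⊆ eigencode ℓ VΩ := by
    rw [hB, hVΩ]
    refine span_subset_eigencode ?_
    rintro _ ⟨c, hc, k, rfl⟩
    exact row_mem_eigencode hm hlam hsplit.splits
      ((hGen _).mp (by rwa [arrOf_polyOfArr])) k
  refine ⟨minDist_mul_minDist_le_minDist τ hτ_eq_zero hτ_Chat hrow_B, ?_⟩
  calc minDist (eigencode (Fq := Fq) ℓ VΩ) ≤ minDist (B : Set (Fin ℓ → Fq)) := minDist_anti hB_sub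
    _ ≤ minDist (Chat : Set (ZMod m → K)) * minDist (B : Set (Fin ℓ → Fq)) :=
      le_mul_of_one_le_left' (one_le_minDist _)

theorem lally_dominates_eigencode
    {Fq F K : Type*} [Field Fq] [Fintype Fq] [Field F] [Algebra Fq F] [Field K] [Algebra Fq K]
    (m ℓ : ℕ) [NeZero m] (hcop : Nat.Coprime m (Fintype.card Fq))
    (lam : Fq) (hlam : lam ≠ 0)
    (hsplit : IsSplittingField Fq F (X ^ m - C lam))
    (𝓒 : Submodule Fq (ZMod m × Fin ℓ → Fq))
    (hQT : ∀ c ∈ 𝓒, rho m ℓ lam c ∈ 𝓒)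
    (h0 : 𝓒 ≠ ⊥)
    (G : Matrix (Fin ℓ) (Fin ℓ) (Polynomial Fq))
    (htri : ∀ i j, j < i → G i j = 0)
    (hdiv : ∀ j, G j j ∣ X ^ m - C lam)
    (hGen : ∀ v : Fin ℓ → Polynomial Fq,
      arrOf m ℓ lam v ∈ 𝓒 ↔ v ∈ Submodule.span (Polynomial Fq) (Set.range fun i j => G i j))
    (hall : ∀ x : F, x ^ m = algebraMap Fq F lam → Polynomial.aeval x G.det = 0)
    (VΩ : Set (Fin ℓ → F))
    (hVΩ : VΩ = ⋂ β ∈ {x : F | x ^ m = algebraMap Fq F lam}, Vspace ℓ G β)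
    (γ : K) (bK : Module.Basis (Fin ℓ) Fq K) (hbK : ∀ j : Fin ℓ, bK j = γ ^ (j : ℕ))
    (τ : (ZMod m × Fin ℓ → Fq) → (ZMod m → K))
    (hτ : ∀ c k, τ c k = ∑ j : Fin ℓ, algebraMap Fq K (c (k, j)) * γ ^ (j : ℕ))
    (Chat : Submodule K (ZMod m → K))
    (hChat : Chat = sInf {D : Submodule K (ZMod m → K) |
      (∀ c ∈ 𝓒, τ c ∈ D) ∧
      ∀ d ∈ D, (fun k => (if k = 0 then algebraMap Fq K lam else 1) * d (k - 1)) ∈ D})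
    (B : Submodule Fq (Fin ℓ → Fq))
    (hB : B = Submodule.span Fq {u | ∃ c ∈ 𝓒, ∃ k : ZMod m, u = fun j => c (k, j)}) :
    minDist (Chat : Set (ZMod m → K)) * minDist (B : Set (Fin ℓ → Fq)) ≤
      minDist (𝓒 : Set (ZMod m × Fin ℓ → Fq)) ∧
    minDist (eigencode (Fq := Fq) ℓ VΩ) ≤
      minDist (Chat : Set (ZMod m → K)) * minDist (B : Set (Fin ℓ → Fq)) :=
  lally_dominates_eigencode_general m ℓ hcop lam hlam hsplit 𝓒 G hGen VΩ hVΩ γ bK hbK τ hτ Chat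
    hChat B hB
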